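/- arXiv:1704.02660 — 3 statements merged into one kernel-verified Lean document; each statement's English description precedes it below -/
import Mathlib

section
/- Let ν be the Borel probability measure on ℝ with ν({2ᵏ}) = 2^{−(k+1)} for every integer k ≥ 0, and let γ be the Borel probability measure with γ({−2^{k+1}}) = 2^{−(k+1)} for every integer k ≥ 0. Then the triplet (ν, ν, γ) is jointly mixable with center 0 and also jointly mixable with center 1. Consequently, the measure μ = (2ν + γ)/3 is 3-completely mixable with 3-centers 0 and 1/3. -/
open MeasureTheory ENNReal

/-- The tuple `μ` of Borel probability measures on ℝ is jointly mixable with center `C`: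
there is a probability measure on ℝⁿ whose `i`-th one-dimensional marginal is `μ i` for each `i`
and which gives probability one to the hyperplane `{x : x₁ + ⋯ + xₙ = C}`. -/
def IsJointMix (n : ℕ) (μ : Fin n → Measure ℝ) (C : ℝ) : Prop :=
  ∃ P : Measure (Fin n → ℝ), IsProbabilityMeasure P ∧
    (∀ i, P.map (fun x => x i) = μ i) ∧
    P {x | ∑ i, x i = C} = 1

/-- A Borel probability measure `μ` on ℝ is `n`-completely mixable with `n`-center `c`. -/
def IsCompletelyMixable (n : ℕ) (μ : Measure ℝ) (c : ℝ) : Prop :=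
  IsJointMix n (fun _ => μ) (n * c)

/-!
Write `K` for a geometric random variable on `ℕ` with parameter `1/2`. Then `ν` is the law of
`2 ^ K` and `γ` the law of `-2 ^ (K + 1)`, so driving all three coordinates by the same `K` gives
`2 ^ K + 2 ^ K - 2 ^ (K + 1) = 0`. For the center `1`, `K` is `0` or `K' + 1` with probability
`1/2` each, where `K'` is again geometric with parameter `1/2`; mixing the vectors
`(1, 2 ^ (K' + 1), -2 ^ (K' + 1))` and `(2 ^ (K' + 1), 1, -2 ^ (K' + 1))` with equal weights gives
marginals `ν, ν, γ` and sum `1`. Averaging a joint mix over the cyclic shifts of the coordinates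
shows that the mean of its marginals is completely mixable.
-/

open ProbabilityTheory

section JointMix

variable {n : ℕ} {μ : Fin n → Measure ℝ} {C : ℝ}

theorem measurableSet_setOf_sum_eq (n : ℕ) (C : ℝ) :
    MeasurableSet {x : Fin n → ℝ | ∑ i, x i = C} :=
  measurableSet_eq_fun (by fun_prop) measurable_const

theorem isJointMix_of_map {α : Type*} [MeasurableSpace α] {ρ : Measure α}
    [IsProbabilityMeasure ρ] {F : α → Fin n → ℝ} (hF : Measurable F)
    (hmarg : ∀ i, ρ.map (fun a => F a i) = μ i) (hsum : ∀ᵐ a ∂ρ, ∑ i, F a i = C) :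
    IsJointMix n μ C := by
  refine ⟨ρ.map F, Measure.isProbabilityMeasure_map hF.aemeasurable, fun i => ?_, ?_⟩
  · rw [Measure.map_map (measurable_pi_apply i) hF]
    exact hmarg i
  · rw [Measure.map_apply hF (measurableSet_setOf_sum_eq n C)]
    have hmeas := ((measurableSet_setOf_sum_eq n C).preimage hF).nullMeasurableSet (μ := ρ)
    exact ((ae_mem_iff_measure_eq hmeas).1 hsum).trans measure_univ

theorem IsJointMix.comp_perm (h : IsJointMix n μ C) (σ : Equiv.Perm (Fin n)) :
    IsJointMix n (μ ∘ σ) C := by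
  obtain ⟨P, hP, hmarg, hC⟩ := h
  have hsum : ∀ᵐ x ∂P, ∑ i, x i = C := by
    rwa [ae_iff_measure_eq (measurableSet_setOf_sum_eq n C).nullMeasurableSet, measure_univ]
  refine isJointMix_of_map (ρ := P) (F := fun x => x ∘ σ) (by fun_prop)
    (fun i => hmarg (σ i)) ?_
  filter_upwards [hsum] with x hx
  simpa [Equiv.sum_comp σ x] using hx

theorem IsJointMix.mixture {ι : Type*} [Fintype ι] {w : ι → ℝ≥0∞} (hw : ∑ j, w j = 1)
    {μ : ι → Fin n → Measure ℝ} (h : ∀ j, IsJointMix n (μ j) C) :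
    IsJointMix n (fun i => ∑ j, w j • μ j i) C := by
  choose P hP hmarg hC using h
  refine ⟨∑ j, w j • P j, ⟨?_⟩, fun i => ?_, ?_⟩
  · simp [Measure.finsetSum_apply, hw]
  · rw [← Measure.mapₗ_apply_of_measurable (measurable_pi_apply i), map_sum]
    simp only [Measure.mapₗ_apply_of_measurable (measurable_pi_apply i), Measure.map_smul, hmarg]
  · simp [Measure.finsetSum_apply, hC, hw]

theorem IsJointMix.isCompletelyMixable [NeZero n] {c : ℝ} (h : IsJointMix n μ (n * c)) :
    IsCompletelyMixable n ((n : ℝ≥0∞)⁻¹ • ∑ i, μ i) c := by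
  have hw : ∑ _j : Fin n, (n : ℝ≥0∞)⁻¹ = 1 := by
    simp [ENNReal.mul_inv_cancel (NeZero.ne (n : ℝ≥0∞)) (natCast_ne_top n)]
  unfold IsCompletelyMixable
  convert IsJointMix.mixture hw fun j => h.comp_perm (Equiv.addLeft j) using 2 with i
  rw [Finset.smul_sum]
  exact (Equiv.sum_comp (Equiv.addRight i) _).symm

end JointMix

theorem Function.Injective.measurableEmbedding_of_countable {α β : Type*}
    [MeasurableSpace α] [MeasurableSpace β] [Countable α] [MeasurableSingletonClass α]
    [MeasurableSingletonClass β] {f : α → β}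
    (hf : Function.Injective f) : MeasurableEmbedding f :=
  ⟨hf, measurable_of_countable f, fun s _ => (s.to_countable.image f).measurableSet⟩

theorem map_eq_of_measure_singleton {α β : Type*} [MeasurableSpace α] [MeasurableSpace β]
    [Countable α] [MeasurableSingletonClass α] [MeasurableSingletonClass β]
    {ρ : Measure α} [IsProbabilityMeasure ρ] {μ : Measure β} [IsProbabilityMeasure μ]
    {f : α → β} (hf : Function.Injective f) (h : ∀ a, μ {f a} = ρ {a}) : ρ.map f = μ := by
  have hf' := hf.measurableEmbedding_of_countable
  have hcomap : μ.comap f = ρ := Measure.ext_of_singleton fun a => by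
    rw [hf'.comap_apply, Set.image_singleton, h]
  have hrange : μ (Set.range f) = 1 := by
    rw [← Set.image_univ, ← hf'.comap_apply, hcomap, measure_univ]
  rw [← hcomap, hf'.map_comap]
  refine Measure.restrict_eq_self_of_ae_mem ?_
  rwa [ae_mem_iff_measure_eq hf'.measurableSet_range.nullMeasurableSet, measure_univ]

noncomputable def halfGeometric : Measure ℕ :=
  geometricMeasure ⟨2⁻¹, by norm_num, by norm_num⟩

instance isProbabilityMeasure_halfGeometric : IsProbabilityMeasure halfGeometric := by
  unfold halfGeometric
  infer_instance

theorem halfGeometric_singleton (k : ℕ) :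
    halfGeometric {k} = ((2 : ℝ≥0∞) ^ (k + 1))⁻¹ := by
  rw [halfGeometric, geometricMeasure_singleton (by simp [← Subtype.coe_ne_coe]),
    show (1 - 2⁻¹ : ℝ) = 2⁻¹ by norm_num, ← pow_succ, ENNReal.ofReal_pow (by norm_num),
    ENNReal.ofReal_inv_of_pos two_pos, ENNReal.ofReal_ofNat, ENNReal.inv_pow]

theorem halfGeometric_eq_add_map_succ :
    halfGeometric =
      (2⁻¹ : ℝ≥0∞) • Measure.dirac 0 + (2⁻¹ : ℝ≥0∞) • halfGeometric.map Nat.succ := by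
  refine Measure.ext_of_singleton fun k => ?_
  rw [Measure.add_apply, Measure.smul_apply, Measure.smul_apply,
    Measure.map_apply (measurable_of_countable _) (measurableSet_singleton _)]
  cases k with
  | zero =>
    have : Nat.succ ⁻¹' {0} = ∅ := Set.eq_empty_of_forall_notMem fun _ => Nat.succ_ne_zero _
    simp [this, halfGeometric_singleton]
  | succ k =>
    have : Nat.succ ⁻¹' {k + 1} = {k} := by
      rw [← Nat.succ_injective.preimage_image {k}, Set.image_singleton]
    simp [this, halfGeometric_singleton, pow_succ, ENNReal.mul_inv, mul_comm]

theorem map_halfGeometric {β : Type*} [MeasurableSpace β] (f : ℕ → β) :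
    halfGeometric.map f =
      (2⁻¹ : ℝ≥0∞) • Measure.dirac (f 0) + (2⁻¹ : ℝ≥0∞) • halfGeometric.map (f ∘ Nat.succ) := by
  conv_lhs => rw [halfGeometric_eq_add_map_succ]
  rw [Measure.map_add _ _ (measurable_of_countable f), Measure.map_smul, Measure.map_smul,
    Measure.map_dirac' (measurable_of_countable f), Measure.map_map (measurable_of_countable f)
    (measurable_of_countable _)]

section DyadicExample

variable {ν γ : Measure ℝ}

theorem isJointMix_zero_of_map_halfGeometric
    (hν : halfGeometric.map (fun k => (2 : ℝ) ^ k) = ν)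
    (hγ : halfGeometric.map (fun k => -(2 : ℝ) ^ (k + 1)) = γ) :
    IsJointMix 3 ![ν, ν, γ] 0 := by
  refine isJointMix_of_map (ρ := halfGeometric) (F := fun k => ![2 ^ k, 2 ^ k, -2 ^ (k + 1)])
    (measurable_of_countable _) (fun i => ?_) (ae_of_all _ fun k => ?_)
  · fin_cases i <;> simp [hν, hγ]
  · simp [Fin.sum_univ_three, pow_succ, mul_two]

theorem isJointMix_one_of_map_halfGeometric
    (hν : halfGeometric.map (fun k => (2 : ℝ) ^ k) = ν)
    (hγ : halfGeometric.map (fun k => -(2 : ℝ) ^ (k + 1)) = γ) :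
    IsJointMix 3 ![ν, ν, γ] 1 := by
  set τ := halfGeometric.map (fun k => (2 : ℝ) ^ (k + 1))
  have hleft : IsJointMix 3 ![Measure.dirac 1, τ, γ] 1 := by
    refine isJointMix_of_map (ρ := halfGeometric) (F := fun k => ![1, 2 ^ (k + 1), -2 ^ (k + 1)])
      (measurable_of_countable _) (fun i => ?_) (ae_of_all _ fun k => ?_)
    · fin_cases i <;> simp [τ, hγ, Measure.map_const]
    · simp [Fin.sum_univ_three]
  have hright : IsJointMix 3 ![τ, Measure.dirac 1, γ] 1 := by
    convert hleft.comp_perm (Equiv.swap 0 1) using 1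
    funext i
    fin_cases i <;> rfl
  have hsplit : ν = (2⁻¹ : ℝ≥0∞) • Measure.dirac 1 + (2⁻¹ : ℝ≥0∞) • τ := by
    rw [← hν, map_halfGeometric]
    simp [τ, Function.comp_def]
  convert IsJointMix.mixture (w := fun _ : Fin 2 => (2⁻¹ : ℝ≥0∞))
    (by simp [ENNReal.mul_inv_cancel])
    (μ := ![![Measure.dirac 1, τ, γ], ![τ, Measure.dirac 1, γ]])
    (fun j => by fin_cases j; exacts [hleft, hright]) using 1
  funext i
  fin_cases i <;>
    simp [Fin.sum_univ_two, hsplit, add_comm, ← add_smul, ENNReal.inv_two_add_inv_two]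

end DyadicExample

theorem stmt6 (ν γ : Measure ℝ) [IsProbabilityMeasure ν] [IsProbabilityMeasure γ]
    (hν : ∀ k : ℕ, ν {(2 : ℝ) ^ k} = ((2 : ℝ≥0∞) ^ (k + 1))⁻¹)
    (hγ : ∀ k : ℕ, γ {-(2 : ℝ) ^ (k + 1)} = ((2 : ℝ≥0∞) ^ (k + 1))⁻¹) :
    IsJointMix 3 ![ν, ν, γ] 0 ∧ IsJointMix 3 ![ν, ν, γ] 1 ∧
    IsCompletelyMixable 3 ((3 : ℝ≥0∞)⁻¹ • ((2 : ℝ≥0∞) • ν + γ)) 0 ∧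
    IsCompletelyMixable 3 ((3 : ℝ≥0∞)⁻¹ • ((2 : ℝ≥0∞) • ν + γ)) (1 / 3) := by
  have hpow : Function.Injective fun k : ℕ => (2 : ℝ) ^ k :=
    pow_right_injective₀ two_pos (by norm_num)
  have hν' : halfGeometric.map (fun k => (2 : ℝ) ^ k) = ν :=
    map_eq_of_measure_singleton hpow fun k => by rw [hν, halfGeometric_singleton]
  have hγ' : halfGeometric.map (fun k => -(2 : ℝ) ^ (k + 1)) = γ :=
    map_eq_of_measure_singleton (neg_injective.comp (hpow.comp Nat.succ_injective))
      fun k => by rw [hγ, halfGeometric_singleton]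
  have h0 := isJointMix_zero_of_map_halfGeometric hν' hγ'
  have h1 := isJointMix_one_of_map_halfGeometric hν' hγ'
  have hmean :
      (3 : ℝ≥0∞)⁻¹ • ((2 : ℝ≥0∞) • ν + γ) = ((3 : ℕ) : ℝ≥0∞)⁻¹ • ∑ i, ![ν, ν, γ] i := by
    simp [Fin.sum_univ_three, two_smul]
  refine ⟨h0, h1, ?_, ?_⟩ <;> rw [hmean] <;> apply IsJointMix.isCompletelyMixable
  · simpa using h0
  · simpa using h1
end

section
/- If a Borel probability measure μ on ℝ is n-completely mixable with n-center c, then a* ≤ c ≤ b*, where a* = sup over α ∈ (0, 1/n) of R_{[α, 1−(n−1)α]}(μ) and b* = inf over α ∈ (0, 1/n) of R_{[(n−1)α, 1−α]}(μ). -/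
open MeasureTheory ENNReal

/-- The quantile function of a probability measure on ℝ. -/
noncomputable def quantile (μ : Measure ℝ) (t : ℝ) : ℝ :=
  sInf {x : ℝ | t ≤ (μ (Set.Iic x)).toReal}

/-- The average quantile functional `R_{[a,b]}(μ)`. -/
noncomputable def avgQuantile (μ : Measure ℝ) (a b : ℝ) : ℝ :=
  (b - a)⁻¹ * ∫ t in a..b, quantile μ t

open ProbabilityTheory Set Filter Topology

/-!
Let `X₁, …, Xₙ ∼ μ` with `X₁ + ⋯ + Xₙ = nc`, and let `w : ℝ → [0,1]` be the density with respect
to `μ` of the image of Lebesgue measure on `(0, 1 - α)` under the quantile function `q`, so that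
`∫ w dμ = 1 - α`. The weight `H = ∏ⱼ w(Xⱼ)` has mean `p ≥ 1 - nα` (union bound) and `H ≤ w(Xᵢ)`,
so with `K = q((n-1)α)` summing `Xᵢ H ≤ K H + w(Xᵢ) (Xᵢ - K)⁺` over `i` gives
`c p ≤ K p + ∫₀^{1-α} (q - K)⁺ = K p + ∫_{(n-1)α}^{1-α} q - K (1 - nα)`,
hence `c ≤ R_{[(n-1)α, 1-α]}(μ)` because `p ≥ 1 - nα`. The lower bound is the upper bound for the
reflected measure, for which `t ↦ -q(1 - t)` plays the role of the quantile function. For `n = 1`,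
`μ` is the point mass at `c`.
-/

lemma Finset.one_sub_prod_le_sum_one_sub {ι : Type*} (s : Finset ι) {f : ι → ℝ}
    (hf : ∀ i ∈ s, f i ∈ Set.Icc 0 1) : 1 - ∏ i ∈ s, f i ≤ ∑ i ∈ s, (1 - f i) := by
  classical
  induction s using Finset.induction_on with
  | empty => simp
  | insert a s ha ih =>
    have hfs : ∀ i ∈ s, f i ∈ Set.Icc 0 1 := fun i hi => hf i (mem_insert_of_mem hi)
    have hprod : ∏ i ∈ s, f i ≤ 1 := prod_le_one (fun i hi => (hfs i hi).1) fun i hi => (hfs i hi).2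
    obtain ⟨hfa0, hfa1⟩ := hf a (mem_insert_self a s)
    rw [prod_insert ha, sum_insert ha]
    nlinarith [ih hfs]

lemma mul_le_add_mul_posPart_sub {x K h v : ℝ} (h0 : 0 ≤ h) (hv : h ≤ v) :
    x * h ≤ K * h + v * max (x - K) 0 := by
  rcases le_total x K with hxK | hKx
  · nlinarith [le_max_right (x - K) 0]
  · rw [max_eq_left (sub_nonneg.2 hKx)]
    nlinarith

lemma MeasureTheory.Measure.exists_density_mem_Icc_of_le {X : Type*} [MeasurableSpace X]
    {ρ μ : Measure X} [SigmaFinite ρ] [SigmaFinite μ] (hρμ : ρ ≤ μ) :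
    ∃ w : X → ℝ, Measurable w ∧ (∀ x, w x ∈ Icc 0 1) ∧ ∀ f : X → ℝ,
      (Integrable (fun x => w x * f x) μ ↔ Integrable f ρ) ∧ ∫ x, w x * f x ∂μ = ∫ x, f x ∂ρ := by
  have hac : ρ ≪ μ := Measure.absolutelyContinuous_of_le hρμ
  refine ⟨fun x => min (ρ.rnDeriv μ x).toReal 1,
    (Measure.measurable_rnDeriv ρ μ).ennreal_toReal.min measurable_const,
    fun x => ⟨le_min toReal_nonneg zero_le_one, min_le_right _ _⟩, fun f => ?_⟩
  have heq : (fun x => min (ρ.rnDeriv μ x).toReal 1 * f x) =ᵐ[μ]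
      fun x => (ρ.rnDeriv μ x).toReal * f x := by
    filter_upwards [Measure.rnDeriv_le_one_of_le hρμ] with x hx
    rw [min_eq_left (toReal_le_of_le_ofReal zero_le_one (by simpa using hx))]
  rw [integrable_congr heq, integral_congr_ae heq]
  exact ⟨integrable_toReal_rnDeriv_mul_iff hac, integral_toReal_rnDeriv_mul hac⟩

lemma map_one_sub_volume_restrict_Ioo :
    (volume.restrict (Ioo (0 : ℝ) 1)).map (fun t => 1 - t) = volume.restrict (Ioo 0 1) := by
  have hpre : (fun t : ℝ => 1 - t) ⁻¹' Ioo 0 1 = Ioo 0 1 := by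
    rw [preimage_const_sub_Ioo]
    norm_num
  have he : MeasurableEmbedding (fun t : ℝ => 1 - t) :=
    (Homeomorph.subLeft (1 : ℝ)).measurableEmbedding
  nth_rewrite 1 [← hpre]
  rw [← he.restrict_map, Measure.map_sub_left_eq_self]

section Quantile

variable {μ : Measure ℝ} {t x : ℝ}

lemma bddBelow_setOf_le_cdf (ht : 0 < t) : BddBelow {x | t ≤ cdf μ x} := by
  obtain ⟨y, hy⟩ := ((tendsto_cdf_atBot μ).eventually (eventually_lt_nhds ht)).exists
  exact ⟨y, fun x hx => not_lt.1 fun hxy => (hx.trans (monotone_cdf μ hxy.le)).not_gt hy⟩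

lemma nonempty_setOf_le_cdf (ht : t < 1) : {x | t ≤ cdf μ x}.Nonempty :=
  ((tendsto_cdf_atTop μ).eventually (eventually_ge_nhds ht)).exists

variable [IsProbabilityMeasure μ]

lemma quantile_eq_sInf_cdf : quantile μ t = sInf {x | t ≤ cdf μ x} := by
  simp only [quantile, cdf_eq_real, measureReal_def]

lemma le_cdf_quantile (ht0 : 0 < t) (ht1 : t < 1) : t ≤ cdf μ (quantile μ t) := by
  have hright : ∀ y ∈ Ioi (quantile μ t), t ≤ cdf μ y := by
    intro y hy
    rw [quantile_eq_sInf_cdf] at hy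
    obtain ⟨z, hz, hzy⟩ :=
      (csInf_lt_iff (bddBelow_setOf_le_cdf ht0) (nonempty_setOf_le_cdf ht1)).1 hy
    exact hz.trans (monotone_cdf μ hzy.le)
  exact ge_of_tendsto (((cdf μ).right_continuous _).mono Ioi_subset_Ici_self)
    (eventually_nhdsWithin_of_forall hright)

lemma quantile_le_iff (ht0 : 0 < t) (ht1 : t < 1) : quantile μ t ≤ x ↔ t ≤ cdf μ x :=
  ⟨fun h => (le_cdf_quantile ht0 ht1).trans (monotone_cdf μ h),
    fun h => quantile_eq_sInf_cdf (μ := μ) ▸ csInf_le (bddBelow_setOf_le_cdf ht0) h⟩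

variable (μ) in
lemma monotoneOn_quantile : MonotoneOn (quantile μ) (Ioo 0 1) := fun _ hs _ ht hst =>
  (quantile_le_iff hs.1 hs.2).2 (hst.trans (le_cdf_quantile ht.1 ht.2))

lemma volume_Iic_inter_Ioo {F : ℝ} (hF : F ≤ 1) :
    volume (Iic F ∩ Ioo 0 1) = ENNReal.ofReal F := by
  refine le_antisymm ?_ ?_
  · calc volume (Iic F ∩ Ioo 0 1) ≤ volume (Ioc 0 F) :=
          measure_mono fun s hs => ⟨hs.2.1, hs.1⟩
      _ = ENNReal.ofReal F := by simp
  · calc ENNReal.ofReal F = volume (Ioo 0 F) := by simp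
      _ ≤ volume (Iic F ∩ Ioo 0 1) :=
          measure_mono fun s hs => ⟨hs.2.le, hs.1, hs.2.trans_le hF⟩

variable (μ) in
lemma map_quantile : (volume.restrict (Ioo 0 1)).map (quantile μ) = μ := by
  have hmeas := aemeasurable_restrict_of_monotoneOn (μ := volume) measurableSet_Ioo
    (monotoneOn_quantile μ)
  have : IsProbabilityMeasure (volume.restrict (Ioo (0 : ℝ) 1)) := ⟨by simp⟩
  have := Measure.isProbabilityMeasure_map hmeas
  refine Measure.ext_of_Iic _ _ fun x => ?_
  have hpre : quantile μ ⁻¹' Iic x ∩ Ioo 0 1 = Iic (cdf μ x) ∩ Ioo 0 1 := by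
    ext t
    exact and_congr_left fun ht => quantile_le_iff ht.1 ht.2
  rw [Measure.map_apply_of_aemeasurable hmeas measurableSet_Iic,
    Measure.restrict_apply₀' measurableSet_Ioo.nullMeasurableSet, hpre,
    volume_Iic_inter_Ioo (cdf_le_one μ x), ofReal_cdf]

end Quantile

lemma quantile_dirac {c t : ℝ} (ht : t ∈ Ioc 0 1) : quantile (Measure.dirac c) t = c := by
  have hset : {x : ℝ | t ≤ (Measure.dirac c (Iic x)).toReal} = Ici c := by
    ext x
    by_cases hcx : c ≤ x <;> simp [hcx, ht.2, not_le.2 ht.1]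
  rw [quantile, hset, csInf_Ici]

lemma avgQuantile_dirac {a b c : ℝ} (ha : 0 ≤ a) (hab : a < b) (hb : b ≤ 1) :
    avgQuantile (Measure.dirac c) a b = c := by
  rw [avgQuantile, intervalIntegral.integral_of_le hab.le,
    setIntegral_congr_fun measurableSet_Ioc fun t ht =>
      quantile_dirac ⟨ha.trans_lt ht.1, ht.2.trans hb⟩,
    setIntegral_const, Real.volume_real_Ioc_of_le hab.le, smul_eq_mul,
    inv_mul_cancel_left₀ (by linarith)]

/-- Allowing any monotone transport, not only `quantile μ`, lets `t ↦ -Q (1 - t)` serve for the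
reflected measure without comparing it with `quantile (μ.map Neg.neg)`. -/
structure IsQuantileFunction (μ : Measure ℝ) (Q : ℝ → ℝ) : Prop where
  monotoneOn : MonotoneOn Q (Ioo 0 1)
  map_eq : (volume.restrict (Ioo 0 1)).map Q = μ

lemma isQuantileFunction_quantile (μ : Measure ℝ) [IsProbabilityMeasure μ] :
    IsQuantileFunction μ (quantile μ) :=
  ⟨monotoneOn_quantile μ, map_quantile μ⟩

namespace IsQuantileFunction

variable {μ : Measure ℝ} {Q : ℝ → ℝ} {a β K : ℝ}

lemma aemeasurable (hQ : IsQuantileFunction μ Q) {s : Set ℝ} (hs : s ⊆ Ioo 0 1) :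
    AEMeasurable Q (volume.restrict s) :=
  (aemeasurable_restrict_of_monotoneOn measurableSet_Ioo hQ.monotoneOn).mono_measure
    (Measure.restrict_mono hs le_rfl)

lemma isProbabilityMeasure (hQ : IsQuantileFunction μ Q) : IsProbabilityMeasure μ := by
  have : IsProbabilityMeasure (volume.restrict (Ioo (0 : ℝ) 1)) := ⟨by simp⟩
  rw [← hQ.map_eq]
  exact Measure.isProbabilityMeasure_map (hQ.aemeasurable subset_rfl)

lemma map_restrict_le (hQ : IsQuantileFunction μ Q) (hβ : β ≤ 1) :
    (volume.restrict (Ioo 0 β)).map Q ≤ μ := by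
  have hsub : Ioo 0 β ⊆ Ioo (0 : ℝ) 1 := Ioo_subset_Ioo_right hβ
  refine Measure.le_iff.2 fun s hs => ?_
  rw [← hQ.map_eq, Measure.map_apply_of_aemeasurable (hQ.aemeasurable hsub) hs,
    Measure.map_apply_of_aemeasurable (hQ.aemeasurable subset_rfl) hs,
    Measure.restrict_apply₀' measurableSet_Ioo.nullMeasurableSet,
    Measure.restrict_apply₀' measurableSet_Ioo.nullMeasurableSet]
  exact measure_mono (inter_subset_inter_right _ hsub)

lemma neg_comp_one_sub (hQ : IsQuantileFunction μ Q) :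
    IsQuantileFunction (μ.map Neg.neg) (fun t => -Q (1 - t)) where
  monotoneOn s hs t ht hst := neg_le_neg <| hQ.monotoneOn ⟨by linarith [ht.2], by linarith [ht.1]⟩
    ⟨by linarith [hs.2], by linarith [hs.1]⟩ (by linarith)
  map_eq := by
    rw [← hQ.map_eq, AEMeasurable.map_map_of_aemeasurable measurable_neg.aemeasurable
      (hQ.aemeasurable subset_rfl)]
    conv_rhs => rw [← map_one_sub_volume_restrict_Ioo]
    rw [AEMeasurable.map_map_of_aemeasurable (by
        rw [map_one_sub_volume_restrict_Ioo]
        exact measurable_neg.comp_aemeasurable (hQ.aemeasurable subset_rfl))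
      (show Measurable (fun t : ℝ => 1 - t) by fun_prop).aemeasurable]
    rfl

lemma integrableOn_Ioo (hQ : IsQuantileFunction μ Q) (ha : 0 < a) (haβ : a ≤ β) (hβ : β < 1) :
    IntegrableOn Q (Ioo a β) := by
  refine (MonotoneOn.intervalIntegrable ?_).1.mono_set Ioo_subset_Ioc_self
  rw [uIcc_of_le haβ]
  exact hQ.monotoneOn.mono (Icc_subset_Ioo ha hβ)

lemma integrableOn_posPart_sub (hQ : IsQuantileFunction μ Q) (hβ0 : 0 < β) (hβ1 : β < 1) :
    IntegrableOn (fun t => max (Q t - K) 0) (Ioo 0 β) := by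
  refine Integrable.of_bound (((hQ.aemeasurable (Ioo_subset_Ioo_right hβ1.le)).sub_const K).max
    aemeasurable_const).aestronglyMeasurable (max (Q β - K) 0) ?_
  refine (ae_restrict_iff' measurableSet_Ioo).2 (ae_of_all _ fun t ht => ?_)
  rw [Real.norm_of_nonneg (le_max_right _ _)]
  exact max_le_max_right 0 (sub_le_sub_right (hQ.monotoneOn ⟨ht.1, ht.2.trans hβ1⟩
    ⟨hβ0, hβ1⟩ ht.2.le) K)

lemma setIntegral_posPart_sub (hQ : IsQuantileFunction μ Q) (ha : 0 < a) (haβ : a < β)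
    (hβ : β < 1) :
    ∫ t in Ioo 0 β, max (Q t - Q a) 0 = (∫ t in a..β, Q t) - Q a * (β - a) := by
  have hint := hQ.integrableOn_posPart_sub (K := Q a) (ha.trans haβ) hβ
  have hlow : ∫ t in Ioc 0 a, max (Q t - Q a) 0 = 0 := by
    refine setIntegral_eq_zero_of_forall_eq_zero fun t ht => max_eq_right ?_
    exact sub_nonpos.2 (hQ.monotoneOn ⟨ht.1, ht.2.trans_lt (haβ.trans hβ)⟩
      ⟨ha, haβ.trans hβ⟩ ht.2)
  have hhigh : ∫ t in Ioo a β, max (Q t - Q a) 0 = ∫ t in Ioo a β, (Q t - Q a) := by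
    refine setIntegral_congr_fun measurableSet_Ioo fun t ht => max_eq_left ?_
    exact sub_nonneg.2 (hQ.monotoneOn ⟨ha, haβ.trans hβ⟩ ⟨ha.trans ht.1, ht.2.trans hβ⟩ ht.1.le)
  rw [← Ioc_union_Ioo_eq_Ioo ha.le haβ,
    setIntegral_union (Ioc_disjoint_Ioi_same.mono_right Ioo_subset_Ioi_self) measurableSet_Ioo
      (hint.mono_set (Ioc_subset_Ioo_right haβ)) (hint.mono_set (Ioo_subset_Ioo_left ha.le)),
    hlow, hhigh, integral_sub (hQ.integrableOn_Ioo ha haβ.le hβ) (integrableOn_const (by simp)),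
    intervalIntegral.integral_of_le haβ.le, integral_Ioc_eq_integral_Ioo, setIntegral_const,
    Real.volume_real_Ioo_of_le haβ.le, smul_eq_mul, zero_add, mul_comm]

end IsQuantileFunction

namespace IsCompletelyMixable

variable {n : ℕ} {μ : Measure ℝ} {c : ℝ}

lemma exists_coupling (h : IsCompletelyMixable n μ c) :
    ∃ P : Measure (Fin n → ℝ), IsProbabilityMeasure P ∧ (∀ i, P.map (fun x => x i) = μ) ∧
      ∀ᵐ x ∂P, ∑ i, x i = n * c := by
  obtain ⟨P, hP, hmarg, hsum⟩ := h
  refine ⟨P, hP, hmarg, (ae_iff_measure_eq ?_).2 (by rw [hsum, measure_univ])⟩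
  exact (measurableSet_eq_fun (by fun_prop) measurable_const).nullMeasurableSet

lemma map_neg (h : IsCompletelyMixable n μ c) : IsCompletelyMixable n (μ.map Neg.neg) (-c) := by
  obtain ⟨P, hP, hmarg, hsum⟩ := h
  have hneg : Measurable (Neg.neg : (Fin n → ℝ) → Fin n → ℝ) := measurable_neg
  refine ⟨P.map Neg.neg, Measure.isProbabilityMeasure_map hneg.aemeasurable, fun i => ?_, ?_⟩
  · show (P.map Neg.neg).map (fun x => x i) = μ.map Neg.neg
    have hmi : P.map (fun x => x i) = μ := hmarg i
    rw [← hmi, Measure.map_map (measurable_pi_apply i) hneg,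
      Measure.map_map (measurable_neg : Measurable (Neg.neg : ℝ → ℝ)) (measurable_pi_apply i)]
    rfl
  · rw [Measure.map_apply hneg (measurableSet_eq_fun (by fun_prop) measurable_const), ← hsum]
    congr 1
    ext x
    simp [Finset.sum_neg_distrib, neg_inj]

lemma eq_dirac_of_one (h : IsCompletelyMixable 1 μ c) : μ = Measure.dirac c := by
  obtain ⟨P, hP, hmarg, hsum⟩ := h.exists_coupling
  have hconst : (fun x : Fin 1 → ℝ => x 0) =ᵐ[P] fun _ => c := by
    filter_upwards [hsum] with x hx
    simpa using hx
  rw [← hmarg 0, Measure.map_congr hconst, Measure.map_const, measure_univ, one_smul]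

end IsCompletelyMixable

section Coupling

variable {n : ℕ} {μ : Measure ℝ} {P : Measure (Fin n → ℝ)} {w : ℝ → ℝ}

lemma integral_comp_eval_of_map_eq {i : Fin n} (hP : P.map (fun x => x i) = μ) {g : ℝ → ℝ}
    (hg : AEStronglyMeasurable g μ) : ∫ x, g (x i) ∂P = ∫ y, g y ∂μ := by
  rw [← hP] at hg ⊢
  exact (integral_map (measurable_pi_apply i).aemeasurable hg).symm

lemma integrable_comp_eval_of_map_eq {i : Fin n} (hP : P.map (fun x => x i) = μ) {g : ℝ → ℝ}
    (hg : Integrable g μ) : Integrable (fun x => g (x i)) P := by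
  rw [← hP] at hg
  exact hg.comp_measurable (measurable_pi_apply i)

variable [IsProbabilityMeasure P]

lemma integrable_comp_eval_of_mem_Icc (hw : Measurable w) (hw01 : ∀ y, w y ∈ Icc 0 1)
    (i : Fin n) : Integrable (fun x => w (x i)) P := by
  refine Integrable.of_bound (hw.comp (measurable_pi_apply i)).aestronglyMeasurable 1
    (ae_of_all _ fun x => ?_)
  rw [Real.norm_of_nonneg (hw01 _).1]
  exact (hw01 _).2

lemma integrable_prod_comp_eval (hw : Measurable w) (hw01 : ∀ y, w y ∈ Icc 0 1) :
    Integrable (fun x => ∏ i, w (x i)) P := by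
  refine Integrable.of_bound (Finset.measurable_prod _ fun i _ =>
    hw.comp (measurable_pi_apply i)).aestronglyMeasurable 1 (ae_of_all _ fun x => ?_)
  rw [Real.norm_of_nonneg (Finset.prod_nonneg fun i _ => (hw01 _).1)]
  exact Finset.prod_le_one (fun i _ => (hw01 _).1) fun i _ => (hw01 _).2

lemma one_sub_mul_le_integral_prod (hP : ∀ i, P.map (fun x => x i) = μ) (hw : Measurable w)
    (hw01 : ∀ y, w y ∈ Icc 0 1) :
    1 - n * (1 - ∫ y, w y ∂μ) ≤ ∫ x, ∏ i, w (x i) ∂P := by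
  have hwi := integrable_comp_eval_of_mem_Icc (P := P) hw hw01
  have hH := integrable_prod_comp_eval (P := P) hw hw01
  have hsub : ∀ i, Integrable (fun x => 1 - w (x i)) P := fun i => (integrable_const 1).sub (hwi i)
  have hterm : ∀ i, ∫ x, (1 - w (x i)) ∂P = 1 - ∫ y, w y ∂μ := fun i => by
    rw [integral_sub (integrable_const 1) (hwi i),
      integral_comp_eval_of_map_eq (hP i) hw.aestronglyMeasurable]
    simp
  have hpt : ∀ x : Fin n → ℝ, 1 - ∏ i, w (x i) ≤ ∑ i, (1 - w (x i)) := fun x =>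
    Finset.univ.one_sub_prod_le_sum_one_sub fun i _ => hw01 (x i)
  have h1H : Integrable (fun x => 1 - ∏ i, w (x i)) P := (integrable_const 1).sub hH
  have hmono := integral_mono h1H (integrable_finsetSum _ fun i _ => hsub i) hpt
  rw [integral_sub (integrable_const 1) hH, integral_finsetSum _ fun i _ => hsub i] at hmono
  simp only [hterm, integral_const, probReal_univ, smul_eq_mul, mul_one,
    Finset.sum_const, Finset.card_univ, Fintype.card_fin, nsmul_eq_mul] at hmono
  linarith

lemma mul_integral_prod_le (hn : n ≠ 0) (hP : ∀ i, P.map (fun x => x i) = μ) {c : ℝ}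
    (hsum : ∀ᵐ x ∂P, ∑ i, x i = n * c) (hw : Measurable w) (hw01 : ∀ y, w y ∈ Icc 0 1) (K : ℝ)
    (hint : Integrable (fun y => w y * max (y - K) 0) μ) :
    c * ∫ x, ∏ i, w (x i) ∂P ≤ K * ∫ x, ∏ i, w (x i) ∂P + ∫ y, w y * max (y - K) 0 ∂μ := by
  have hH := integrable_prod_comp_eval (P := P) hw hw01
  have hcoord : ∀ i, Integrable (fun x => w (x i) * max (x i - K) 0) P := fun i =>
    integrable_comp_eval_of_map_eq (hP i) hint
  have hterm : ∀ i, Integrable (fun x => K * ∏ j, w (x j) + w (x i) * max (x i - K) 0) P :=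
    fun i => (hH.const_mul K).add (hcoord i)
  have hpt : ∀ᵐ x ∂P,
      n * c * ∏ j, w (x j) ≤ ∑ i, (K * ∏ j, w (x j) + w (x i) * max (x i - K) 0) := by
    filter_upwards [hsum] with x hx
    rw [← hx, Finset.sum_mul]
    refine Finset.sum_le_sum fun i _ => mul_le_add_mul_posPart_sub
      (Finset.prod_nonneg fun j _ => (hw01 _).1) ?_
    rw [← Finset.mul_prod_erase _ _ (Finset.mem_univ i)]
    exact mul_le_of_le_one_right (hw01 _).1
      (Finset.prod_le_one (fun j _ => (hw01 _).1) fun j _ => (hw01 _).2)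
  have hmono := integral_mono_ae (hH.const_mul (n * c))
    (integrable_finsetSum _ fun i _ => hterm i) hpt
  simp only [integral_const_mul, integral_finsetSum _ fun i _ => hterm i,
    integral_add (hH.const_mul K) (hcoord _),
    integral_comp_eval_of_map_eq (hP _) hint.aestronglyMeasurable,
    Finset.sum_const, Finset.card_univ, Fintype.card_fin, nsmul_eq_mul, mul_assoc] at hmono
  exact le_of_mul_le_mul_left hmono (by positivity)

end Coupling

lemma IsCompletelyMixable.sub_le_div {n : ℕ} {μ : Measure ℝ} {c : ℝ}
    (h : IsCompletelyMixable n μ c) (hn : n ≠ 0) {w : ℝ → ℝ} (hw : Measurable w)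
    (hw01 : ∀ y, w y ∈ Icc 0 1) {α : ℝ} (hmass : ∫ y, w y ∂μ = 1 - α) (hnα : n * α < 1) (K : ℝ)
    (hint : Integrable (fun y => w y * max (y - K) 0) μ) :
    c - K ≤ (∫ y, w y * max (y - K) 0 ∂μ) / (1 - n * α) := by
  obtain ⟨P, hP, hmarg, hsum⟩ := h.exists_coupling
  have hp := one_sub_mul_le_integral_prod hmarg hw hw01
  rw [hmass, _root_.sub_sub_cancel] at hp
  have hcp := mul_integral_prod_le hn hmarg hsum hw hw01 K hint
  have hA : 0 ≤ ∫ y, w y * max (y - K) 0 ∂μ :=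
    integral_nonneg fun y => mul_nonneg (hw01 y).1 (le_max_right _ _)
  rw [le_div_iff₀ (by linarith)]
  rcases le_total c K with hcK | hKc
  · nlinarith
  · calc (c - K) * (1 - n * α) ≤ (c - K) * ∫ x, ∏ i, w (x i) ∂P :=
          mul_le_mul_of_nonneg_left hp (sub_nonneg.2 hKc)
      _ ≤ ∫ y, w y * max (y - K) 0 ∂μ := by linarith

lemma IsQuantileFunction.le_avg {μ : Measure ℝ} {Q : ℝ → ℝ} {n : ℕ} {c α : ℝ}
    (hQ : IsQuantileFunction μ Q) (h : IsCompletelyMixable n μ c) (hn : 2 ≤ n)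
    (hα : 0 < α) (hnα : n * α < 1) :
    c ≤ (1 - α - (n - 1) * α)⁻¹ * ∫ t in (n - 1) * α..1 - α, Q t := by
  have : IsProbabilityMeasure μ := hQ.isProbabilityMeasure
  have hn1 : (1 : ℝ) < n := by exact_mod_cast hn
  set a := ((n : ℝ) - 1) * α
  have ha : 0 < a := mul_pos (by linarith) hα
  have haβ : a < 1 - α := by linarith
  have hβ : 1 - α < 1 := by linarith
  have hL : 1 - α - a = 1 - n * α := by ring
  obtain ⟨w, hw, hw01, hwρ⟩ := Measure.exists_density_mem_Icc_of_le (hQ.map_restrict_le hβ.le)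
  have hQm := hQ.aemeasurable (Ioo_subset_Ioo_right hβ.le)
  have hmass : ∫ y, w y ∂μ = 1 - α := by
    simpa [Measure.real, Measure.map_apply_of_aemeasurable hQm MeasurableSet.univ,
      ENNReal.toReal_ofReal (by linarith : (0 : ℝ) ≤ 1 - α)] using (hwρ 1).2
  have hf : AEStronglyMeasurable (fun y => max (y - Q a) 0)
      ((volume.restrict (Ioo 0 (1 - α))).map Q) := by fun_prop
  have hint : Integrable (fun y => w y * max (y - Q a) 0) μ :=
    (hwρ _).1.2 ((integrable_map_measure hf hQm).2
      (hQ.integrableOn_posPart_sub (ha.trans haβ) hβ))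
  have hA : ∫ y, w y * max (y - Q a) 0 ∂μ = (∫ t in a..1 - α, Q t) - Q a * (1 - α - a) := by
    rw [(hwρ _).2, integral_map hQm hf, hQ.setIntegral_posPart_sub ha haβ hβ]
  have hcore := h.sub_le_div (by omega) hw hw01 hmass hnα (Q a) hint
  rw [hA, hL, le_div_iff₀ (by linarith)] at hcore
  rw [hL, inv_mul_eq_div, le_div_iff₀ (by linarith)]
  linarith

section Bounds

variable {n : ℕ} {μ : Measure ℝ} [IsProbabilityMeasure μ] {c α : ℝ}

lemma le_avgQuantile_of_isCompletelyMixable (hn : 1 ≤ n) (h : IsCompletelyMixable n μ c)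
    (hα : 0 < α) (hαn : α < 1 / n) : c ≤ avgQuantile μ ((n - 1) * α) (1 - α) := by
  have hnα : n * α < 1 := by rwa [lt_div_iff₀ (by positivity), mul_comm] at hαn
  rcases hn.eq_or_lt with rfl | hn2
  · rw [h.eq_dirac_of_one, Nat.cast_one, sub_self, zero_mul,
      avgQuantile_dirac le_rfl (by linarith) (by linarith)]
  · exact (isQuantileFunction_quantile μ).le_avg h hn2 hα hnα

lemma avgQuantile_le_of_isCompletelyMixable (hn : 1 ≤ n) (h : IsCompletelyMixable n μ c)
    (hα : 0 < α) (hαn : α < 1 / n) : avgQuantile μ α (1 - (n - 1) * α) ≤ c := by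
  have hnα : n * α < 1 := by rwa [lt_div_iff₀ (by positivity), mul_comm] at hαn
  rcases hn.eq_or_lt with rfl | hn2
  · rw [h.eq_dirac_of_one, Nat.cast_one, sub_self, zero_mul, sub_zero,
      avgQuantile_dirac hα.le (by linarith) le_rfl]
  · have hneg := (isQuantileFunction_quantile μ).neg_comp_one_sub.le_avg h.map_neg hn2 hα hnα
    rw [intervalIntegral.integral_neg, intervalIntegral.integral_comp_sub_left (quantile μ),
      _root_.sub_sub_cancel] at hneg
    rw [avgQuantile, sub_right_comm]
    linarith

end Bounds

theorem stmt10 (n : ℕ) (hn : 1 ≤ n) (μ : Measure ℝ) [IsProbabilityMeasure μ]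
    (c : ℝ) (h : IsCompletelyMixable n μ c) :
    sSup ((fun α : ℝ => avgQuantile μ α (1 - ((n : ℝ) - 1) * α)) '' Set.Ioo 0 (1 / n)) ≤ c ∧
    c ≤ sInf ((fun α : ℝ => avgQuantile μ (((n : ℝ) - 1) * α) (1 - α)) '' Set.Ioo 0 (1 / n)) := by
  have hne : (Ioo (0 : ℝ) (1 / n)).Nonempty := nonempty_Ioo.2 (by positivity)
  refine ⟨csSup_le (hne.image _) ?_, le_csInf (hne.image _) ?_⟩ <;>
    rintro _ ⟨α, ⟨hα, hαn⟩, rfl⟩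
  · exact avgQuantile_le_of_isCompletelyMixable hn h hα hαn
  · exact le_avgQuantile_of_isCompletelyMixable hn h hα hαn
end

section
/- Let n ≥ 2 and let μ be the standard Cauchy distribution. For α ∈ (0, 1/n), R_{[(n−1)α, 1−α]}(μ) = (1/(π(1−nα)))·log(sin(π(n−1)α)/sin(πα)), and consequently every n-center c of μ satisfies |c| ≤ log(n−1)/π. -/
open MeasureTheory ENNReal

/-- The standard Cauchy distribution on ℝ. -/
noncomputable def stdCauchy : Measure ℝ :=
  volume.withDensity (fun x => ENNReal.ofReal ((Real.pi * (1 + x ^ 2))⁻¹))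

/-!
The quantile of the standard Cauchy law is `tan (π (t - 1/2)) = -cot (π t)`, whose antiderivative
is `-log (sin (π t)) / π`; this gives the average quantile.

For the bound on a center `c`, let `X₁ + ⋯ + Xₙ = n c` with Cauchy marginals and clamp every `Xᵢ`
to `[-R, n c + (n - 1) R]`. If some `Xᵢ` exceeds the upper end, the clamped sum is still at least
`(n c + (n - 1) R) + (n - 1)(-R) = n c`; otherwise clamping can only increase the sum. Taking
expectations, `c ≤ E[clamp Xᵢ]`, which is explicit for the Cauchy law and tends to
`log (n - 1) / π` as `R → ∞`. The lower bound follows by symmetry: `-c` is a center as well.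
-/

open Real Filter Set Topology MeasureTheory

lemma quantile_eq_of_strictMono {μ : Measure ℝ} (hF : StrictMono fun x => (μ (Iic x)).toReal)
    {t x₀ : ℝ} (hx₀ : (μ (Iic x₀)).toReal = t) : quantile μ t = x₀ := by
  have : {x | t ≤ (μ (Iic x)).toReal} = Ici x₀ := by
    ext x
    simp [← hx₀, hF.le_iff_le]
  rw [quantile, this, csInf_Ici]

def clamp (t M x : ℝ) : ℝ := max t (min x M)

lemma continuous_clamp (t M : ℝ) : Continuous (clamp t M) := by
  unfold clamp; fun_prop

lemma abs_clamp_le {t M : ℝ} (h : t ≤ M) (x : ℝ) : |clamp t M x| ≤ max |t| |M| := by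
  unfold clamp
  refine abs_le.2 ⟨?_, ?_⟩
  · linarith [neg_abs_le t, le_max_left |t| |M|, le_max_left t (min x M)]
  · linarith [le_abs_self M, le_max_right |t| |M|, max_le h (min_le_right x M)]

lemma sum_le_sum_clamp {ι : Type*} [Fintype ι] {t M : ℝ} (h : t ≤ M) (x : ι → ℝ)
    (hx : ∑ i, x i ≤ M + (Fintype.card ι - 1) * t) : ∑ i, x i ≤ ∑ i, clamp t M (x i) := by
  classical
  by_cases hle : ∀ i, x i ≤ M
  · exact Finset.sum_le_sum fun i _ => by simp [clamp, hle i]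
  obtain ⟨i₀, hi₀⟩ : ∃ i, M < x i := by simpa using hle
  have hcard : ((Finset.univ.erase i₀).card : ℝ) = Fintype.card ι - 1 := by
    rw [Finset.card_erase_of_mem (Finset.mem_univ i₀), Finset.card_univ,
      Nat.cast_pred (Fintype.card_pos_iff.2 ⟨i₀⟩)]
  have hrest : (Fintype.card ι - 1) * t ≤ ∑ i ∈ Finset.univ.erase i₀, clamp t M (x i) := by
    have := (Finset.univ.erase i₀).card_nsmul_le_sum (fun i => clamp t M (x i)) t
      fun i _ => le_max_left _ _
    rwa [nsmul_eq_mul, hcard] at this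
  have hi₀' : clamp t M (x i₀) = M := by simp [clamp, hi₀.le, h]
  linarith [Finset.add_sum_erase _ (fun i => clamp t M (x i)) (Finset.mem_univ i₀)]

lemma IsJointMix.neg {n : ℕ} {μ : Fin n → Measure ℝ} {C : ℝ} (h : IsJointMix n μ C) :
    IsJointMix n (fun i => (μ i).map Neg.neg) (-C) := by
  obtain ⟨P, hP, hmarg, hsum⟩ := h
  refine ⟨P.map Neg.neg, Measure.isProbabilityMeasure_map measurable_neg.aemeasurable,
    fun i => ?_, ?_⟩
  · show _ = (μ i).map Neg.neg
    rw [← hmarg i, Measure.map_map (by fun_prop) (by fun_prop),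
      Measure.map_map (by fun_prop) (by fun_prop)]
    rfl
  · rw [Measure.map_apply measurable_neg
      (measurableSet_eq_fun (by fun_prop) measurable_const), ← hsum]
    congr 1 with x
    simp [neg_eq_iff_eq_neg]

lemma IsCompletelyMixable.neg {n : ℕ} {μ : Measure ℝ} {c : ℝ} (h : IsCompletelyMixable n μ c) :
    IsCompletelyMixable n (μ.map Neg.neg) (-c) := by
  unfold IsCompletelyMixable
  simpa using IsJointMix.neg h

lemma IsCompletelyMixable.le_integral {n : ℕ} {μ : Measure ℝ} {c : ℝ} {f : ℝ → ℝ}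
    (h : IsCompletelyMixable n μ c) (hn : 0 < n) (hf : Measurable f) (hfμ : Integrable f μ)
    (hle : ∀ x : Fin n → ℝ, ∑ i, x i = n * c → n * c ≤ ∑ i, f (x i)) :
    c ≤ ∫ y, f y ∂μ := by
  obtain ⟨P, hP, hmarg, hsum⟩ := h
  replace hmarg : ∀ i : Fin n, P.map (fun x => x i) = μ := hmarg
  have hfP : ∀ i : Fin n, Integrable (fun x : Fin n → ℝ => f (x i)) P := fun i => by
    rw [← hmarg i] at hfμ
    exact hfμ.comp_measurable (measurable_pi_apply i)
  have hae : ∀ᵐ x ∂P, ∑ i, x i = n * c :=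
    (ae_iff_measure_eq (measurableSet_eq_fun (by fun_prop) measurable_const).nullMeasurableSet).2
      (by rw [hsum, measure_univ])
  have : (n : ℝ) * c ≤ n * ∫ y, f y ∂μ := calc
    (n : ℝ) * c = ∫ _, (n : ℝ) * c ∂P := by simp
    _ ≤ ∫ x, ∑ i, f (x i) ∂P :=
      integral_mono_ae (integrable_const _) (integrable_finsetSum _ fun i _ => hfP i)
        (hae.mono fun x hx => hle x hx)
    _ = ∑ i : Fin n, ∫ x, f (x i) ∂P := integral_finsetSum _ fun i _ => hfP i
    _ = ∑ _i : Fin n, ∫ y, f y ∂μ := by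
      congr with i
      rw [← hmarg i, integral_map (measurable_pi_apply i).aemeasurable hf.aestronglyMeasurable]
    _ = n * ∫ y, f y ∂μ := by simp
  exact le_of_mul_le_mul_left this (by exact_mod_cast hn)

lemma tan_pi_mul_sub_half (t : ℝ) : tan (π * (t - 1 / 2)) = -(cos (π * t) / sin (π * t)) := by
  rw [tan_eq_sin_div_cos, mul_sub, mul_one_div, sin_sub_pi_div_two, cos_sub_pi_div_two, neg_div]

lemma sin_pi_mul_pos {t : ℝ} (ht : t ∈ Ioo 0 1) : 0 < sin (π * t) :=
  sin_pos_of_pos_of_lt_pi (by nlinarith [pi_pos, ht.1]) (by nlinarith [pi_pos, ht.2])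

lemma hasDerivAt_neg_log_sin_pi_mul_div_pi {t : ℝ} (ht : sin (π * t) ≠ 0) :
    HasDerivAt (fun u => -(Real.log (sin (π * u)) / π)) (-(cos (π * t) / sin (π * t))) t := by
  have hsin : HasDerivAt (fun u => sin (π * u)) (cos (π * t) * π) t := by
    simpa using ((hasDerivAt_id t).const_mul π).sin
  exact ((hsin.log ht).div_const π).neg.congr_deriv (by field_simp)

lemma integral_mul_inv_one_add_sq (a b : ℝ) :
    ∫ x in a..b, x * (1 + x ^ 2)⁻¹ = (Real.log (1 + b ^ 2) - Real.log (1 + a ^ 2)) / 2 := by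
  have hderiv : ∀ x : ℝ, HasDerivAt (fun y => Real.log (1 + y ^ 2) / 2) (x * (1 + x ^ 2)⁻¹) x :=
    fun x => ((((hasDerivAt_pow 2 x).const_add 1).log (by positivity)).div_const 2).congr_deriv
      (by simp; field_simp)
  rw [intervalIntegral.integral_eq_sub_of_hasDerivAt (fun x _ => hderiv x)
    ((continuous_id.mul ((continuous_const.add (continuous_pow 2)).inv₀
      fun x => (by positivity : (0 : ℝ) < 1 + x ^ 2).ne')).intervalIntegrable _ _)]
  ring

lemma tendsto_mul_pi_div_two_sub_arctan_atTop :
    Tendsto (fun x => x * (π / 2 - arctan x)) atTop (𝓝 1) := by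
  have h0 : Tendsto (fun u => u⁻¹ * arctan u) (𝓝[≠] 0) (𝓝 1) := by
    simpa using hasDerivAt_iff_tendsto_slope_zero.1 (hasDerivAt_arctan 0)
  refine (h0.comp (tendsto_inv_atTop_nhdsGT_zero.mono_right
    (nhdsWithin_mono _ fun x hx => ne_of_gt hx))).congr' ?_
  filter_upwards [eventually_gt_atTop 0] with x hx
  simp [arctan_inv_of_pos hx]

lemma tendsto_one_add_sq_div_one_add_sq (a b : ℝ) :
    Tendsto (fun R => (1 + (a + b * R) ^ 2) / (1 + R ^ 2)) atTop (𝓝 (b ^ 2)) := by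
  have hinv := tendsto_inv_atTop_zero (𝕜 := ℝ)
  have h := ((hinv.pow 2).add (((hinv.const_mul a).add_const b).pow 2)).div
    ((hinv.pow 2).add_const 1) (by norm_num)
  simp only [ne_eq, OfNat.ofNat_ne_zero, not_false_eq_true, zero_pow, mul_zero, zero_add,
    div_one] at h
  refine h.congr' ?_
  filter_upwards [eventually_ne_atTop 0] with R hR
  rw [Pi.div_apply]
  field_simp

lemma integrable_cauchyDensity : Integrable fun x : ℝ => (π * (1 + x ^ 2))⁻¹ := by
  simpa only [mul_inv] using integrable_inv_one_add_sq.const_mul π⁻¹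

lemma integral_stdCauchy (g : ℝ → ℝ) :
    ∫ x, g x ∂stdCauchy = ∫ x, (π * (1 + x ^ 2))⁻¹ * g x := by
  rw [stdCauchy, integral_withDensity_eq_integral_toReal_smul (by fun_prop)
    (.of_forall fun _ => ENNReal.ofReal_lt_top)]
  congr 1 with x
  rw [ENNReal.toReal_ofReal (by positivity), smul_eq_mul]

instance isProbabilityMeasure_stdCauchy : IsProbabilityMeasure stdCauchy where
  measure_univ := by
    rw [stdCauchy, withDensity_apply _ MeasurableSet.univ, Measure.restrict_univ,
      ← ofReal_integral_eq_lintegral_ofReal integrable_cauchyDensity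
        (.of_forall fun _ => by positivity)]
    simp only [mul_inv, integral_const_mul, integral_univ_inv_one_add_sq,
      inv_mul_cancel₀ pi_ne_zero, ENNReal.ofReal_one]

lemma stdCauchy_map_neg : stdCauchy.map Neg.neg = stdCauchy := by
  ext s hs
  rw [Measure.map_apply measurable_neg hs, stdCauchy, withDensity_apply _ (measurable_neg hs),
    withDensity_apply _ hs, ← (Measure.measurePreserving_neg volume).setLIntegral_comp_preimage_emb
    measurableEmbedding_neg (fun x => ENNReal.ofReal (π * (1 + x ^ 2))⁻¹) s]
  simp only [neg_sq]

lemma stdCauchy_Iic_toReal (x : ℝ) :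
    (stdCauchy (Iic x)).toReal = 1 / 2 + arctan x / π := by
  rw [stdCauchy, withDensity_apply _ measurableSet_Iic,
    ← ofReal_integral_eq_lintegral_ofReal integrable_cauchyDensity.integrableOn
      (.of_forall fun y => by positivity)]
  simp only [mul_inv, integral_const_mul, integral_Iic_inv_one_add_sq]
  have := neg_pi_div_two_lt_arctan x
  rw [ENNReal.toReal_ofReal (by field_simp; linarith)]
  field_simp
  ring

lemma quantile_stdCauchy {t : ℝ} (ht : t ∈ Ioo 0 1) :
    quantile stdCauchy t = tan (π * (t - 1 / 2)) := by
  have hF : StrictMono fun x => (stdCauchy (Iic x)).toReal := by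
    simpa only [stdCauchy_Iic_toReal] using (arctan_strictMono.div_const pi_pos).const_add (1 / 2)
  apply quantile_eq_of_strictMono hF
  have := pi_pos
  rw [stdCauchy_Iic_toReal, arctan_tan]
  · field_simp; ring
  all_goals nlinarith [ht.1, ht.2]

lemma integral_quantile_stdCauchy {a b : ℝ} (ha : 0 < a) (hab : a ≤ b) (hb : b < 1) :
    ∫ t in a..b, quantile stdCauchy t =
      (Real.log (sin (π * a)) - Real.log (sin (π * b))) / π := by
  have hmem : ∀ t ∈ uIcc a b, t ∈ Ioo 0 1 := fun t ht => by
    rw [uIcc_of_le hab] at ht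
    exact ⟨ha.trans_le ht.1, ht.2.trans_lt hb⟩
  have hderiv : ∀ t ∈ uIcc a b,
      HasDerivAt (fun u => -(Real.log (sin (π * u)) / π)) (-(cos (π * t) / sin (π * t))) t :=
    fun t ht => hasDerivAt_neg_log_sin_pi_mul_div_pi (sin_pi_mul_pos (hmem t ht)).ne'
  have hcont : ContinuousOn (fun t => -(cos (π * t) / sin (π * t))) (uIcc a b) :=
    ContinuousOn.neg <| ContinuousOn.div (by fun_prop) (by fun_prop)
      fun t ht => (sin_pi_mul_pos (hmem t ht)).ne'
  rw [intervalIntegral.integral_congr fun t ht => by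
      rw [quantile_stdCauchy (hmem t ht), tan_pi_mul_sub_half],
    intervalIntegral.integral_eq_sub_of_hasDerivAt hderiv hcont.intervalIntegrable]
  ring

lemma avgQuantile_stdCauchy {a b : ℝ} (ha : 0 < a) (hab : a ≤ b) (hb : b < 1) :
    avgQuantile stdCauchy a b =
      (Real.log (sin (π * a)) - Real.log (sin (π * b))) / (π * (b - a)) := by
  rw [avgQuantile, integral_quantile_stdCauchy ha hab hb, div_eq_mul_inv _ (π * _), mul_inv]
  ring

lemma integral_clamp_stdCauchy {t M : ℝ} (h : t ≤ M) :
    ∫ x, clamp t M x ∂stdCauchy = (t * (arctan t + π / 2)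
      + (Real.log (1 + M ^ 2) - Real.log (1 + t ^ 2)) / 2 + M * (π / 2 - arctan M)) / π := by
  set g : ℝ → ℝ := fun x => (π * (1 + x ^ 2))⁻¹ * clamp t M x
  have hg : Integrable g := integrable_cauchyDensity.mul_bdd
    (continuous_clamp t M).aestronglyMeasurable (.of_forall (abs_clamp_le h))
  have hleft : ∫ x in Iic t, g x = t * (arctan t + π / 2) / π := by
    rw [setIntegral_congr_fun measurableSet_Iic fun x (hx : x ≤ t) =>
      show g x = t / π * (1 + x ^ 2)⁻¹ by simp [g, clamp, hx, hx.trans h]; ring,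
      integral_const_mul, integral_Iic_inv_one_add_sq]
    ring
  have hmid : ∫ x in t..M, g x = (Real.log (1 + M ^ 2) - Real.log (1 + t ^ 2)) / 2 / π := by
    rw [intervalIntegral.integral_congr fun x hx =>
      show g x = π⁻¹ * (x * (1 + x ^ 2)⁻¹) by
        rw [uIcc_of_le h] at hx
        simp [g, clamp, hx.1, hx.2]; ring,
      intervalIntegral.integral_const_mul, integral_mul_inv_one_add_sq]
    ring
  have hright : ∫ x in Ioi M, g x = M * (π / 2 - arctan M) / π := by
    rw [setIntegral_congr_fun measurableSet_Ioi fun x (hx : M < x) =>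
      show g x = M / π * (1 + x ^ 2)⁻¹ by simp [g, clamp, hx.le, h]; ring,
      integral_const_mul, integral_Ioi_inv_one_add_sq]
    ring
  rw [integral_stdCauchy, ← intervalIntegral.integral_Iic_add_Ioi hg.integrableOn hg.integrableOn,
    ← intervalIntegral.integral_interval_add_Ioi hg.integrableOn hg.integrableOn, hleft, hmid,
    hright]
  ring

lemma tendsto_integral_clamp_stdCauchy (a : ℝ) {b : ℝ} (hb : 0 < b) :
    Tendsto (fun R => ∫ x, clamp (-R) (a + b * R) x ∂stdCauchy) atTop (𝓝 (Real.log b / π)) := by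
  have hM : Tendsto (fun R => a + b * R) atTop atTop :=
    tendsto_atTop_add_const_left _ _ (tendsto_id.const_mul_atTop hb)
  have hlog : Tendsto (fun R => Real.log (1 + (a + b * R) ^ 2) - Real.log (1 + R ^ 2)) atTop
      (𝓝 (Real.log (b ^ 2))) := by
    refine ((continuousAt_log (by positivity)).tendsto.comp
      (tendsto_one_add_sq_div_one_add_sq a b)).congr fun R => ?_
    exact log_div (by positivity) (by positivity)
  have hlim := (((tendsto_mul_pi_div_two_sub_arctan_atTop.neg).add (hlog.div_const 2)).add
    (tendsto_mul_pi_div_two_sub_arctan_atTop.comp hM)).div_const π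
  rw [Real.log_pow] at hlim
  convert hlim.congr' ?_ using 2
  · push_cast; ring
  filter_upwards [eventually_ge_atTop (-a / (1 + b))] with R hR
  rw [integral_clamp_stdCauchy, arctan_neg, neg_sq]
  · simp only [Function.comp]; ring
  · rw [div_le_iff₀ (by linarith)] at hR
    linarith

lemma IsCompletelyMixable.le_log_div_pi {n : ℕ} {c : ℝ}
    (h : IsCompletelyMixable n stdCauchy c) (hn : 2 ≤ n) : c ≤ Real.log (n - 1) / π := by
  have hn' : (2 : ℝ) ≤ n := by exact_mod_cast hn
  refine ge_of_tendsto (tendsto_integral_clamp_stdCauchy (n * c) (b := n - 1) (by linarith)) ?_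
  filter_upwards [eventually_ge_atTop |c|] with R hR
  have htM : -R ≤ n * c + (n - 1) * R := by nlinarith [neg_abs_le c]
  refine h.le_integral (by omega) (continuous_clamp _ _).measurable
    (.of_bound (continuous_clamp _ _).aestronglyMeasurable _ (.of_forall (abs_clamp_le htM)))
    fun x hx => ?_
  have := sum_le_sum_clamp htM x (by simp [hx])
  rwa [hx] at this

theorem stmt17 (n : ℕ) (hn : 2 ≤ n) :
    (∀ α ∈ Set.Ioo (0 : ℝ) (1 / n),
      avgQuantile stdCauchy (((n : ℝ) - 1) * α) (1 - α) =
        (1 / (Real.pi * (1 - n * α))) *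
          Real.log (Real.sin (Real.pi * ((n : ℝ) - 1) * α) / Real.sin (Real.pi * α))) ∧
    ∀ c : ℝ, IsCompletelyMixable n stdCauchy c →
      |c| ≤ Real.log ((n : ℝ) - 1) / Real.pi := by
  refine ⟨fun α ⟨hα0, hα1⟩ => ?_, fun c hc => abs_le.2 ⟨?_, hc.le_log_div_pi hn⟩⟩
  · have hn' : (2 : ℝ) ≤ n := by exact_mod_cast hn
    have hnα : n * α < 1 := by rwa [lt_div_iff₀ (by positivity), mul_comm] at hα1
    have ha : ((n : ℝ) - 1) * α ∈ Ioo 0 1 := ⟨by nlinarith, by nlinarith⟩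
    have hsin : sin (π * (1 - α)) = sin (π * α) := by rw [mul_one_sub, sin_pi_sub]
    rw [avgQuantile_stdCauchy ha.1 (by nlinarith) (by linarith), hsin, mul_assoc π,
      log_div (sin_pi_mul_pos ha).ne' (sin_pi_mul_pos ⟨hα0, by nlinarith⟩).ne',
      show 1 - α - (n - 1) * α = 1 - n * α by ring]
    ring
  · have := (stdCauchy_map_neg ▸ hc.neg).le_log_div_pi hn
    linarith
end
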